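/- arXiv:1910.04085 — 5 statements merged into one kernel-verified Lean document; each statement's English description precedes it below -/
import Mathlib

section
/- Let J ≥ 1 be an integer, P a Borel probability measure on C([0,1]), X a random element of C([0,1]) with law P, x ∈ C([0,1]), and a, b ∈ ℝ with a ≠ 0. Then the ACH depth is scalar affine invariant: D_J(x, P) = D_J(a·x + b, P_{aX+b}) and D̄_J(x, P) = D̄_J(a·x + b, P_{aX+b}), where P_{aX+b} denotes the pushforward of P under the map f ↦ a·f + b (b being identified with the constant function of value b). -/
/-! The map `f ↦ a • f + b` acts on graphs as the affine map `(t, y) ↦ (t, a * y + b)` of the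
plane, which commutes with convex hulls and multiplies areas by `|a|`; hence every ratio under
the expectation is unchanged. Since `f ↦ a • f + b` is a measurable bijection of `C([0,1])`,
the `J`-fold product of the pushforward of `P` is the pushforward of the `J`-fold product of `P`,
and the change of variables gives the invariance of each `D_j`, hence of their average. -/

open MeasureTheory Filter Topology
open scoped ENNReal

noncomputable section

abbrev I01 : Set ℝ := Set.Icc 0 1

abbrev CI := C(I01, ℝ)

noncomputable instance : MeasurableSpace CI := borel CI
instance : BorelSpace CI := ⟨rfl⟩

/-- The graph of a continuous function on `[0,1]`, as a subset of `ℝ²`. -/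
def graph (x : CI) : Set (ℝ × ℝ) := Set.range fun t : I01 => ((t : ℝ), x t)

/-- The area (2-dimensional Lebesgue measure) of the convex hull of a set in `ℝ²`. -/
def ach (A : Set (ℝ × ℝ)) : ℝ := (volume (convexHull ℝ A)).toReal

/-- Ratio of the area of the convex hull of the graphs of a batch of curves to the area of
the convex hull once `x` is added (`0/0 = 0` convention, as division by zero is zero). -/
def achRatio {m : ℕ} (xs : Fin m → CI) (x : CI) : ℝ :=
  ach (⋃ i, graph (xs i)) / ach ((⋃ i, graph (xs i)) ∪ graph x)

/-- The ACH depth of degree `J` of `x` w.r.t. `P`. -/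
def ACHDepth (J : ℕ) (P : Measure CI) (x : CI) : ℝ :=
  ∫ xs, achRatio xs x ∂(Measure.pi fun _ : Fin J => P)

/-- The average ACH depth of degree `J`. -/
def avgACHDepth (J : ℕ) (P : Measure CI) (x : CI) : ℝ :=
  (J : ℝ)⁻¹ * ∑ j ∈ Finset.Icc 1 J, ACHDepth j P x

/-- A curve is non-constant. -/
def Nonconstant (x : CI) : Prop := ¬ ∃ c : ℝ, ∀ t, x t = c

/-- The empirical ACH depth (`U`-statistic of degree `J`) based on the first `n` curves. -/
def empDepth (J n : ℕ) (X : ℕ → CI) (x : CI) : ℝ :=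
  (n.choose J : ℝ)⁻¹ * ∑ s ∈ Finset.powersetCard J (Finset.range n),
    ach (⋃ i ∈ s, graph (X i)) / ach ((⋃ i ∈ s, graph (X i)) ∪ graph x)

/-- The average empirical ACH depth. -/
def avgEmpDepth (J n : ℕ) (X : ℕ → CI) (x : CI) : ℝ :=
  (J : ℝ)⁻¹ * ∑ j ∈ Finset.Icc 1 J, empDepth j n X x

/-- The band delimited by a finite family of curves. -/
def band {m : ℕ} (xs : Fin m → CI) : Set (ℝ × ℝ) :=
  {p | ∃ t : I01, p.1 = (t : ℝ) ∧ (⨅ i, xs i t) ≤ p.2 ∧ p.2 ≤ ⨆ i, xs i t}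

open scoped Pointwise

def verticalAffine (a b : ℝ) : ℝ × ℝ →ᵃ[ℝ] ℝ × ℝ :=
  (LinearMap.id.prodMap (a • LinearMap.id)).toAffineMap + AffineMap.const ℝ (ℝ × ℝ) (0, b)

@[simp]
lemma verticalAffine_apply (a b : ℝ) (p : ℝ × ℝ) :
    verticalAffine a b p = (p.1, a * p.2 + b) := by
  simp [verticalAffine]

lemma volume_image_verticalAffine (a b : ℝ) (S : Set (ℝ × ℝ)) :
    volume (verticalAffine a b '' S) = ENNReal.ofReal |a| * volume S := by
  have himage : verticalAffine a b '' S = ((0 : ℝ), b) +ᵥ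
      (LinearMap.id.prodMap (a • LinearMap.id) : ℝ × ℝ →ₗ[ℝ] ℝ × ℝ) '' S := by
    rw [← Set.image_vadd, ← Set.image_comp]
    congr 1
    ext p <;> simp [add_comm]
  rw [himage, measure_vadd, Measure.addHaar_image_linearMap, LinearMap.det_prodMap, LinearMap.det_id,
    LinearMap.det_smul, LinearMap.det_id]
  simp

lemma ach_image_verticalAffine (a b : ℝ) (S : Set (ℝ × ℝ)) :
    ach (verticalAffine a b '' S) = |a| * ach S := by
  rw [ach, ← AffineMap.image_convexHull, volume_image_verticalAffine, ENNReal.toReal_mul,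
    ENNReal.toReal_ofReal (abs_nonneg a), ach]

lemma graph_smul_add_const (a b : ℝ) (f : CI) :
    graph (a • f + ContinuousMap.const I01 b) = verticalAffine a b '' graph f := by
  rw [graph, graph, ← Set.range_comp]
  ext; simp

lemma achRatio_smul_add_const {m : ℕ} {a : ℝ} (ha : a ≠ 0) (b : ℝ) (xs : Fin m → CI) (x : CI) :
    achRatio (fun i => a • xs i + ContinuousMap.const I01 b)
      (a • x + ContinuousMap.const I01 b) = achRatio xs x := by
  simp only [achRatio, graph_smul_add_const, ← Set.image_iUnion, ← Set.image_union,
    ach_image_verticalAffine]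
  exact mul_div_mul_left _ _ (abs_ne_zero.mpr ha)

lemma ACHDepth_map_measurableEquiv (j : ℕ) (P : Measure CI) [SigmaFinite P] (e : CI ≃ᵐ CI)
    (x : CI) (he : ∀ xs : Fin j → CI, achRatio (fun i => e (xs i)) (e x) = achRatio xs x) :
    ACHDepth j (P.map e) (e x) = ACHDepth j P x := by
  have : SigmaFinite (P.map e) := e.sigmaFinite_map
  have hpi : (Measure.pi fun _ : Fin j => P.map e)
      = (Measure.pi fun _ : Fin j => P).map (MeasurableEquiv.piCongrRight fun _ => e) :=
    (measurePreserving_pi _ _ fun _ => e.measurable.measurePreserving P).map_eq.symm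
  rw [ACHDepth, hpi, integral_map_equiv]
  exact integral_congr_ae (.of_forall he)

lemma ACHDepth_map_smul_add_const (j : ℕ) (P : Measure CI) [SigmaFinite P] (x : CI) {a : ℝ}
    (ha : a ≠ 0) (b : ℝ) :
    ACHDepth j (P.map fun f : CI => a • f + ContinuousMap.const I01 b)
      (a • x + ContinuousMap.const I01 b) = ACHDepth j P x :=
  ACHDepth_map_measurableEquiv j P
    ((Homeomorph.smulOfNeZero a ha).trans (Homeomorph.addRight _)).toMeasurableEquiv x
    (achRatio_smul_add_const ha b · x)

theorem ach_depth_affine_invariant_general (J : ℕ)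
    (P : Measure CI) [IsProbabilityMeasure P] (x : CI) (a b : ℝ) (ha : a ≠ 0) :
    ACHDepth J P x =
      ACHDepth J (P.map fun f : CI => a • f + ContinuousMap.const I01 b)
        (a • x + ContinuousMap.const I01 b) ∧
    avgACHDepth J P x =
      avgACHDepth J (P.map fun f : CI => a • f + ContinuousMap.const I01 b)
        (a • x + ContinuousMap.const I01 b) :=
  ⟨(ACHDepth_map_smul_add_const J P x ha b).symm, by
    simp only [avgACHDepth, ACHDepth_map_smul_add_const _ P x ha b]⟩

/-- scalar affine invariance of the (average) ACH depth. -/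
theorem ach_depth_affine_invariant (J : ℕ) (hJ : 1 ≤ J)
    (P : Measure CI) [IsProbabilityMeasure P] (x : CI) (a b : ℝ) (ha : a ≠ 0) :
    ACHDepth J P x =
      ACHDepth J (P.map fun f : CI => a • f + ContinuousMap.const I01 b)
        (a • x + ContinuousMap.const I01 b) ∧
    avgACHDepth J P x =
      avgACHDepth J (P.map fun f : CI => a • f + ContinuousMap.const I01 b)
        (a • x + ContinuousMap.const I01 b) :=
  ach_depth_affine_invariant_general J P x a b ha

end
end

section
/- Let J ≥ 1 be an integer and P any Borel probability measure on C([0,1]). If (x_n) is a sequence in C([0,1]) with ‖x_n‖_∞ → ∞ as n → ∞, then D_J(x_n, P) → 0 and D̄_J(x_n, P) → 0 (vanishing at infinity of the ACH depth). -/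
open MeasureTheory Filter Topology
open scoped ENNReal

noncomputable section

/-! The hull of the graphs of `X₁, …, X_J` lies in `[0,1] × [-S, S]` with `S = ∑ ‖Xᵢ‖`, so its
area is at most `2 S`. Adding `x` adds a point `(u, x u)` with `|x u| = ‖x‖`, at vertical distance
at least `‖x‖ - S` from the chord of `X₁` over `[0,1]`; the triangle it spans with the farther
chord endpoint has area at least `(‖x‖ - S) / 4`. Hence the ratio inside the depth is at most
`min 1 (16 S / ‖x‖)`, which tends to `0` pointwise and is bounded by `1`, so dominated convergence
applies. -/

open Set
open scoped Interval

theorem Convex.ordConnected_fiber {C : Set (ℝ × ℝ)} (hC : Convex ℝ C) (t : ℝ) :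
    OrdConnected {y | (t, y) ∈ C} :=
  convex_iff_ordConnected.mp fun a ha b hb θ φ hθ hφ hθφ => by
    simpa [← add_mul, hθφ] using hC ha hb hθ hφ hθφ

theorem Convex.triangle_area_le_volume {C : Set (ℝ × ℝ)} (hC : Convex ℝ C) {t₀ t₁ y z v : ℝ}
    (hy : (t₀, y) ∈ C) (hz : (t₀, z) ∈ C) (hv : (t₁, v) ∈ C) :
    ENNReal.ofReal (|t₁ - t₀| * |z - y| / 2) ≤ volume C := by
  wlog hyz : y ≤ z generalizing y z
  · simpa only [abs_sub_comm z y] using this hz hy (le_of_not_ge hyz)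
  rcases eq_or_ne t₀ t₁ with rfl | hne
  · simp
  set σ : ℝ → ℝ := fun t => (t - t₁) / (t₀ - t₁)
  have hσ : ∀ t ∈ Ι t₁ t₀, 0 ≤ σ t ∧ σ t ≤ 1 := by
    intro t ht
    rcases lt_or_gt_of_ne hne with h | h
    · rw [uIoc_of_ge h.le] at ht
      exact ⟨div_nonneg_of_nonpos (by linarith [ht.2]) (by linarith),
        (div_le_one_of_neg (by linarith)).2 (by linarith [ht.1])⟩
    · rw [uIoc_of_le h.le] at ht
      exact ⟨div_nonneg (by linarith [ht.1]) (by linarith),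
        (div_le_one (by linarith)).2 (by linarith [ht.2])⟩
  -- `chord w` is the segment from the apex `(t₁, v)` to `(t₀, w)`, seen as a function of `t`
  set chord : ℝ → ℝ → ℝ := fun w t => v + σ t * (w - v)
  have hchord : ∀ w, (t₀, w) ∈ C → ∀ t ∈ Ι t₁ t₀, (t, chord w t) ∈ C := by
    intro w hw t ht
    convert hC hv hw (sub_nonneg.2 (hσ t ht).2) (hσ t ht).1 (by ring) using 1
    ext
    · simp only [σ, Prod.smul_mk, Prod.mk_add_mk, smul_eq_mul]; field_simp; ring
    · simp only [chord, Prod.smul_mk, Prod.mk_add_mk, smul_eq_mul]; ring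
  have hsub : regionBetween (chord y) (chord z) (Ι t₁ t₀) ⊆ C := by
    rintro ⟨t, w⟩ ⟨ht, hw⟩
    exact (hC.ordConnected_fiber t).out (hchord y hy t ht) (hchord z hz t ht)
      (Ioo_subset_Icc_self hw)
  have hdiff : chord z - chord y = fun t => (z - y) / (t₀ - t₁) * (t - t₁) := by
    ext t; simp only [chord, σ, Pi.sub_apply]; field_simp; ring
  have hvol : volume (regionBetween (chord y) (chord z) (Ι t₁ t₀)) =
      ENNReal.ofReal (∫ t in Ι t₁ t₀, (chord z - chord y) t) := by
    rw [Measure.volume_eq_prod]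
    exact volume_regionBetween_eq_integral (by fun_prop : Continuous (chord y)).integrableOn_uIoc
      (by fun_prop : Continuous (chord z)).integrableOn_uIoc measurableSet_uIoc
      fun t ht => by simp only [chord]; nlinarith [(hσ t ht).1]
  have hint : ∫ t in Ι t₁ t₀, (chord z - chord y) t = |t₁ - t₀| * (z - y) / 2 := by
    have hnonneg : 0 ≤ ∫ t in Ι t₁ t₀, (chord z - chord y) t :=
      setIntegral_nonneg measurableSet_uIoc fun t ht => by
        simp only [chord, Pi.sub_apply]; nlinarith [(hσ t ht).1]
    rw [← abs_of_nonneg hnonneg, ← intervalIntegral.abs_integral_eq_abs_integral_uIoc, hdiff,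
      intervalIntegral.integral_const_mul,
      intervalIntegral.integral_comp_sub_right (fun x : ℝ => x), integral_id]
    rw [show (z - y) / (t₀ - t₁) * (((t₀ - t₁) ^ 2 - (t₁ - t₁) ^ 2) / 2)
        = (t₀ - t₁) * (z - y) / 2 by field_simp; ring,
      abs_div, abs_mul, abs_sub_comm t₀, abs_of_nonneg (sub_nonneg.2 hyz), abs_two]
  calc ENNReal.ofReal (|t₁ - t₀| * |z - y| / 2)
      = volume (regionBetween (chord y) (chord z) (Ι t₁ t₀)) := by
        rw [hvol, hint, abs_of_nonneg (sub_nonneg.2 hyz)]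
    _ ≤ volume C := measure_mono hsub

theorem Convex.chord_gap_div_four_le_volume {C : Set (ℝ × ℝ)} (hC : Convex ℝ C) {a b u y : ℝ}
    (hu : u ∈ Icc (0 : ℝ) 1) (ha : (0, a) ∈ C) (hb : (1, b) ∈ C) (hy : (u, y) ∈ C) :
    ENNReal.ofReal (|y - ((1 - u) * a + u * b)| / 4) ≤ volume C := by
  have hchord : (u, (1 - u) * a + u * b) ∈ C := by
    convert hC ha hb (sub_nonneg.2 hu.2) hu.1 (by ring) using 1
    simp
  -- the farther of the two chord endpoints is at horizontal distance at least `1 / 2`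
  rcases le_total u (1 / 2) with h | h
  · refine le_trans (ENNReal.ofReal_le_ofReal ?_) (hC.triangle_area_le_volume hchord hy hb)
    rw [abs_of_nonneg (by linarith : (0 : ℝ) ≤ 1 - u)]
    nlinarith [abs_nonneg (y - ((1 - u) * a + u * b))]
  · refine le_trans (ENNReal.ofReal_le_ofReal ?_) (hC.triangle_area_le_volume hchord hy ha)
    rw [zero_sub, abs_neg, abs_of_nonneg hu.1]
    nlinarith [abs_nonneg (y - ((1 - u) * a + u * b))]

theorem graph_subset_Icc_prod {x : CI} {R : ℝ} (h : ‖x‖ ≤ R) :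
    graph x ⊆ Icc 0 1 ×ˢ Icc (-R) R := by
  rintro _ ⟨t, rfl⟩
  exact ⟨t.2, abs_le.mp ((x.norm_coe_le_norm t).trans h)⟩

theorem volume_convexHull_le {A : Set (ℝ × ℝ)} {R : ℝ} (hA : A ⊆ Icc 0 1 ×ˢ Icc (-R) R) :
    volume (convexHull ℝ A) ≤ ENNReal.ofReal (2 * R) :=
  calc volume (convexHull ℝ A) ≤ volume (Icc (0 : ℝ) 1 ×ˢ Icc (-R) R) :=
        measure_mono (convexHull_min hA ((convex_Icc _ _).prod (convex_Icc _ _)))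
    _ = ENNReal.ofReal (2 * R) := by
        rw [Measure.volume_eq_prod, Measure.prod_prod, Real.volume_Icc, Real.volume_Icc,
          sub_zero, ENNReal.ofReal_one, one_mul, sub_neg_eq_add, two_mul]

theorem exists_norm_le_abs_apply (x : CI) : ∃ u : I01, ‖x‖ ≤ |x u| := by
  obtain ⟨u, -, hu⟩ := isCompact_univ.exists_isMaxOn univ_nonempty
    (by fun_prop : Continuous fun t => |x t|).continuousOn
  exact ⟨u, (x.norm_le (abs_nonneg _)).2 fun t => hu (mem_univ t)⟩

theorem ofReal_le_volume_convexHull_graph_union (w x : CI) :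
    ENNReal.ofReal ((‖x‖ - ‖w‖) / 4) ≤ volume (convexHull ℝ (graph w ∪ graph x)) := by
  obtain ⟨u, hu⟩ := exists_norm_le_abs_apply x
  set ℓ := (1 - (u : ℝ)) * w 0 + u * w 1
  have hℓ : |ℓ| ≤ ‖w‖ := by
    have h0 := w.norm_coe_le_norm 0
    have h1 := w.norm_coe_le_norm 1
    rw [Real.norm_eq_abs] at h0 h1
    calc |ℓ| ≤ (1 - u) * |w 0| + u * |w 1| := by
          refine (abs_add_le _ _).trans_eq ?_
          rw [abs_mul, abs_mul, abs_of_nonneg (sub_nonneg.2 u.2.2), abs_of_nonneg u.2.1]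
      _ ≤ (1 - u) * ‖w‖ + u * ‖w‖ := by
          gcongr
          · exact sub_nonneg.2 u.2.2
          · exact u.2.1
      _ = ‖w‖ := by ring
  have hmem : ∀ t : I01, ((t : ℝ), w t) ∈ convexHull ℝ (graph w ∪ graph x) := fun t =>
    subset_convexHull ℝ _ (Or.inl ⟨t, rfl⟩)
  refine le_trans (ENNReal.ofReal_le_ofReal ?_)
    ((convex_convexHull ℝ _).chord_gap_div_four_le_volume u.2 (hmem 0) (hmem 1)
      (subset_convexHull ℝ _ (Or.inr ⟨u, rfl⟩)))
  have := abs_sub_abs_le_abs_sub (x u) ℓ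
  gcongr
  linarith

section achRatio

variable {m : ℕ} (xs : Fin m → CI) (x : CI)

theorem iUnion_graph_subset_Icc_prod :
    (⋃ i, graph (xs i)) ⊆ Icc 0 1 ×ˢ Icc (-∑ i, ‖xs i‖) (∑ i, ‖xs i‖) :=
  iUnion_subset fun i => graph_subset_Icc_prod <|
    Finset.single_le_sum (fun i _ => norm_nonneg (xs i)) (Finset.mem_univ i)

theorem ach_iUnion_graph_le : ach (⋃ i, graph (xs i)) ≤ 2 * ∑ i, ‖xs i‖ :=
  ENNReal.toReal_le_of_le_ofReal (by positivity)
    (volume_convexHull_le (iUnion_graph_subset_Icc_prod xs))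

theorem volume_convexHull_iUnion_graph_union_ne_top :
    volume (convexHull ℝ ((⋃ i, graph (xs i)) ∪ graph x)) ≠ ⊤ := by
  have hS : 0 ≤ ∑ i, ‖xs i‖ := by positivity
  have hx : 0 ≤ ‖x‖ := norm_nonneg x
  refine ne_top_of_le_ne_top ENNReal.ofReal_ne_top (volume_convexHull_le (R := ∑ i, ‖xs i‖ + ‖x‖)
    (union_subset ((iUnion_graph_subset_Icc_prod xs).trans ?_) (graph_subset_Icc_prod ?_)))
  · exact prod_mono_right (Icc_subset_Icc (by linarith) (by linarith))
  · linarith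

theorem achRatio_nonneg : 0 ≤ achRatio xs x :=
  div_nonneg ENNReal.toReal_nonneg ENNReal.toReal_nonneg

theorem achRatio_le_one : achRatio xs x ≤ 1 :=
  div_le_one_of_le₀ (ENNReal.toReal_mono (volume_convexHull_iUnion_graph_union_ne_top xs x)
    (measure_mono (convexHull_mono subset_union_left))) ENNReal.toReal_nonneg

theorem achRatio_le_div_norm (hx : 0 < ‖x‖) : achRatio xs x ≤ 16 * (∑ i, ‖xs i‖) / ‖x‖ := by
  set S := ∑ i, ‖xs i‖
  rcases isEmpty_or_nonempty (Fin m) with hm | ⟨⟨i⟩⟩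
  · simp [achRatio, ach, S]
  rcases lt_or_ge ‖x‖ (2 * S) with hsmall | hlarge
  · exact (achRatio_le_one xs x).trans ((one_le_div hx).2 (by linarith))
  have hi : ‖xs i‖ ≤ S := Finset.single_le_sum (fun i _ => norm_nonneg (xs i)) (Finset.mem_univ i)
  have hden : ‖x‖ / 8 ≤ ach ((⋃ i, graph (xs i)) ∪ graph x) := by
    refine (ENNReal.ofReal_le_iff_le_toReal (volume_convexHull_iUnion_graph_union_ne_top xs x)).1 ?_
    refine le_trans (ENNReal.ofReal_le_ofReal (by linarith))
      ((ofReal_le_volume_convexHull_graph_union (xs i) x).trans (measure_mono (convexHull_mono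
        (union_subset_union_left _ (subset_iUnion (fun i => graph (xs i)) i)))))
  calc achRatio xs x ≤ 2 * S / (‖x‖ / 8) :=
        div_le_div₀ (by linarith [norm_nonneg (xs i)]) (ach_iUnion_graph_le xs)
          (div_pos hx (by norm_num)) hden
    _ = 16 * S / ‖x‖ := by rw [div_div_eq_mul_div]; ring

end achRatio

theorem abs_min_one_div_le_one {a r : ℝ} (ha : 0 ≤ a) (hr : 0 ≤ r) : |min 1 (a / r)| ≤ 1 :=
  abs_le.2 ⟨le_min (by norm_num) (by linarith [div_nonneg ha hr]), min_le_left _ _⟩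

theorem tendsto_integral_min_one_div_atTop {α : Type*} [MeasurableSpace α] {μ : Measure α}
    [IsFiniteMeasure μ] {f : α → ℝ} (hf : Measurable f) (hf0 : 0 ≤ f) {r : ℕ → ℝ}
    (hr : Tendsto r atTop atTop) :
    Tendsto (fun n => ∫ a, min 1 (f a / r n) ∂μ) atTop (𝓝 0) := by
  have hlim : ∀ a, Tendsto (fun n => min 1 (f a / r n)) atTop (𝓝 0) := fun a => by
    simpa using (tendsto_const_nhds (x := (1 : ℝ))).min (tendsto_const_nhds.div_atTop hr)
  simpa using tendsto_integral_filter_of_dominated_convergence (fun _ => 1)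
    (Eventually.of_forall fun n => (measurable_const.min (hf.div_const _)).aestronglyMeasurable)
    ((hr.eventually_ge_atTop 0).mono fun n hn => ae_of_all _ fun a =>
      abs_min_one_div_le_one (hf0 a) hn)
    (integrable_const 1) (ae_of_all _ hlim)

theorem tendsto_ACHDepth_atTop_zero (J : ℕ) (P : Measure CI) [IsFiniteMeasure P] {x : ℕ → CI}
    (hx : Tendsto (fun n => ‖x n‖) atTop atTop) :
    Tendsto (fun n => ACHDepth J P (x n)) atTop (𝓝 0) := by
  set S : (Fin J → CI) → ℝ := fun xs => 16 * ∑ i, ‖xs i‖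
  have hS : Measurable S :=
    (Finset.measurable_sum _ fun i _ => (measurable_pi_apply i).norm).const_mul 16
  have hS0 : 0 ≤ S := fun xs => by positivity
  refine tendsto_of_tendsto_of_tendsto_of_le_of_le' tendsto_const_nhds
    (tendsto_integral_min_one_div_atTop (μ := Measure.pi fun _ => P) hS hS0 hx)
    (Eventually.of_forall fun n => integral_nonneg fun xs => achRatio_nonneg xs (x n)) ?_
  filter_upwards [hx.eventually_gt_atTop 0] with n hn
  refine integral_mono_of_nonneg (ae_of_all _ fun xs => achRatio_nonneg xs (x n))
    (Integrable.mono' (integrable_const 1)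
      (measurable_const.min (hS.div_const _)).aestronglyMeasurable
      (ae_of_all _ fun xs => abs_min_one_div_le_one (hS0 xs) hn.le))
    (ae_of_all _ fun xs => le_min (achRatio_le_one xs (x n)) (achRatio_le_div_norm xs (x n) hn))

theorem ach_depth_vanishing_at_infinity_general (J : ℕ)
    (P : Measure CI) [IsProbabilityMeasure P]
    (x : ℕ → CI) (hx : Tendsto (fun n => ‖x n‖) atTop atTop) :
    Tendsto (fun n => ACHDepth J P (x n)) atTop (𝓝 0) ∧
    Tendsto (fun n => avgACHDepth J P (x n)) atTop (𝓝 0) := by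
  refine ⟨tendsto_ACHDepth_atTop_zero J P hx, ?_⟩
  simpa [avgACHDepth] using (tendsto_finsetSum (Finset.Icc 1 J) fun j _ =>
    tendsto_ACHDepth_atTop_zero j P hx).const_mul (J : ℝ)⁻¹

/-- the (average) ACH depth vanishes at infinity. -/
theorem ach_depth_vanishing_at_infinity (J : ℕ) (hJ : 1 ≤ J)
    (P : Measure CI) [IsProbabilityMeasure P]
    (x : ℕ → CI) (hx : Tendsto (fun n => ‖x n‖) atTop atTop) :
    Tendsto (fun n => ACHDepth J P (x n)) atTop (𝓝 0) ∧
    Tendsto (fun n => avgACHDepth J P (x n)) atTop (𝓝 0) :=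
  ach_depth_vanishing_at_infinity_general J P x hx

end
end

section
/- Let j ≥ 1 and x_1, …, x_j ∈ C([0,1]) be fixed. If (z_n) is a sequence in C([0,1]) with ‖z_n‖_∞ → ∞, then λ(conv(graph({x_1, …, x_j, z_n}))) → ∞ as n → ∞. In particular, the ratio λ(conv(graph({x_1, …, x_j}))) / λ(conv(graph({x_1, …, x_j, z_n}))) converges to 0 (with the convention that a ratio with zero denominator equals 0). -/
open MeasureTheory Filter Topology
open scoped ENNReal

noncomputable section

/-!
The convex hull of the graphs contains the triangle with vertices `(0, x(0))`, `(1, x(1))` and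
`(t, z(t))`, where `x` is one of the fixed curves and `|z(t)| = ‖z‖`. Its area is half the
determinant `|z(t) - x(0) - t (x(1) - x(0))| ≥ ‖z‖ - 3 ‖x‖`, so it grows linearly in `‖z‖`, while
the numerator of the ratio stays fixed.
-/

theorem ContinuousMap.exists_norm_eq_norm_apply {α E : Type*} [TopologicalSpace α]
    [CompactSpace α] [Nonempty α] [SeminormedAddCommGroup E] (f : C(α, E)) :
    ∃ t, ‖f‖ = ‖f t‖ := by
  obtain ⟨t, -, ht⟩ := isCompact_univ.exists_isMaxOn Set.univ_nonempty
    (continuous_norm.comp f.continuous).continuousOn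
  exact ⟨t, le_antisymm ((f.norm_le (norm_nonneg _)).2 fun s => ht (Set.mem_univ s))
    (f.norm_coe_le_norm t)⟩

theorem isCompact_graph (x : CI) : IsCompact (graph x) :=
  isCompact_range (continuous_subtype_val.prodMk x.continuous)

/-- The triangle contains the image of `[0, 1/2]²` under `(a, b) ↦ p₀ + a (p₁ - p₀) + b (p₂ - p₀)`,
whose area is a quarter of the determinant. -/
theorem ofReal_abs_det_div_four_le_volume_convexHull (p₀ p₁ p₂ : ℝ × ℝ) :
    ENNReal.ofReal (|(p₁ - p₀).1 * (p₂ - p₀).2 - (p₂ - p₀).1 * (p₁ - p₀).2| / 4) ≤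
      volume (convexHull ℝ {p₀, p₁, p₂}) := by
  set u := p₁ - p₀
  set v := p₂ - p₀
  let L : (ℝ × ℝ) →ₗ[ℝ] ℝ × ℝ :=
    (LinearMap.fst ℝ ℝ ℝ).smulRight u + (LinearMap.snd ℝ ℝ ℝ).smulRight v
  have hdet : L.det = u.1 * v.2 - v.1 * u.2 := by
    rw [← LinearMap.det_toMatrix (Module.Basis.finTwoProd ℝ), Matrix.det_fin_two]
    simp [L, LinearMap.toMatrix_apply, Module.Basis.finTwoProd_zero,
      Module.Basis.finTwoProd_one, Module.Basis.coe_finTwoProd_repr]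
  have hsub : (p₀ + ·) '' (L '' Set.Icc (0, 0) (2⁻¹, 2⁻¹)) ⊆ convexHull ℝ {p₀, p₁, p₂} := by
    rintro - ⟨-, ⟨⟨a, b⟩, ⟨⟨ha₀ : 0 ≤ a, hb₀ : 0 ≤ b⟩, ⟨ha₁ : a ≤ 2⁻¹, hb₁ : b ≤ 2⁻¹⟩⟩, rfl⟩, rfl⟩
    have hsum := (convex_convexHull ℝ {p₀, p₁, p₂}).sum_mem (t := Finset.univ)
      (w := ![1 - a - b, a, b]) (z := ![p₀, p₁, p₂])
      (by simp only [Finset.mem_univ, forall_const, Fin.forall_fin_succ, Matrix.cons_val,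
        IsEmpty.forall_iff, and_true]; exact ⟨by linarith, ha₀, hb₀⟩)
      (by simp only [Fin.sum_univ_three, Matrix.cons_val]; ring)
      (fun i _ => subset_convexHull ℝ _ (by fin_cases i <;> simp))
    convert hsum using 1
    simp only [Fin.sum_univ_three, Matrix.cons_val, L, LinearMap.add_apply,
      LinearMap.smulRight_apply, LinearMap.fst_apply, LinearMap.snd_apply, u, v]
    module
  have hvol :
      volume ((p₀ + ·) '' (L '' Set.Icc (0, 0) (2⁻¹, 2⁻¹))) = ENNReal.ofReal (|L.det| / 4) := by
    rw [Set.image_add_left, measure_preimage_add, Measure.addHaar_image_linearMap,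
      ← Set.Icc_prod_Icc, Measure.volume_eq_prod, Measure.prod_prod, Real.volume_Icc,
      ← ENNReal.ofReal_mul (by norm_num), ← ENNReal.ofReal_mul (abs_nonneg _)]
    norm_num [div_eq_mul_inv]
  rw [← hdet, ← hvol]
  exact measure_mono hsub

theorem abs_det_div_four_le_ach {S : Set (ℝ × ℝ)} (hS : Bornology.IsBounded S)
    {p₀ p₁ p₂ : ℝ × ℝ} (h₀ : p₀ ∈ S) (h₁ : p₁ ∈ S) (h₂ : p₂ ∈ S) :
    |(p₁ - p₀).1 * (p₂ - p₀).2 - (p₂ - p₀).1 * (p₁ - p₀).2| / 4 ≤ ach S := by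
  have hfin : volume (convexHull ℝ S) ≠ ⊤ := (isBounded_convexHull.2 hS).measure_lt_top.ne
  refine (ENNReal.ofReal_le_iff_le_toReal hfin).1 ?_
  exact (ofReal_abs_det_div_four_le_volume_convexHull p₀ p₁ p₂).trans
    (measure_mono (convexHull_mono (by simp [Set.insert_subset_iff, *])))

/-- Uses the triangle spanned by the endpoints of the graph of `x` and a point where `|z|`
attains `‖z‖`. -/
theorem norm_sub_three_mul_norm_div_four_le_ach {S : Set (ℝ × ℝ)} (hS : Bornology.IsBounded S)
    {x z : CI} (hx : graph x ⊆ S) (hz : graph z ⊆ S) :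
    (‖z‖ - 3 * ‖x‖) / 4 ≤ ach S := by
  obtain ⟨t, ht⟩ := z.exists_norm_eq_norm_apply
  let a : I01 := ⟨0, by norm_num⟩
  let b : I01 := ⟨1, by norm_num⟩
  refine le_trans ?_ (abs_det_div_four_le_ach hS (hx ⟨a, rfl⟩) (hx ⟨b, rfl⟩) (hz ⟨t, rfl⟩))
  have hxa : |x a| ≤ ‖x‖ := x.norm_coe_le_norm a
  have hxb : |x b| ≤ ‖x‖ := x.norm_coe_le_norm b
  have hslope : |(t : ℝ) * (x b - x a)| ≤ 2 * ‖x‖ := by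
    rw [abs_mul, abs_of_nonneg t.2.1]
    nlinarith [t.2.2, abs_sub (x b) (x a), abs_nonneg (x b - x a)]
  have hdet : ‖z‖ - 3 * ‖x‖ ≤ |(z t - x a) - t * (x b - x a)| := by
    rw [ht, Real.norm_eq_abs]
    linarith [abs_sub_abs_le_abs_sub (z t - x a) (t * (x b - x a)),
      abs_sub_abs_le_abs_sub (z t) (x a)]
  gcongr ?_ / 4
  simpa [a, b] using hdet

/-- for fixed curves `x₁, …, x_j`, as `‖z_n‖_∞ → ∞` the area of the convex hull of
the graphs together with `z_n` tends to infinity, and the corresponding ratio tends to `0`. -/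
theorem ach_tendsto_atTop_of_norm_tendsto_atTop (j : ℕ) (hj : 1 ≤ j) (xs : Fin j → CI)
    (z : ℕ → CI) (hz : Tendsto (fun n => ‖z n‖) atTop atTop) :
    Tendsto (fun n => ach ((⋃ i, graph (xs i)) ∪ graph (z n))) atTop atTop ∧
    Tendsto (fun n => ach (⋃ i, graph (xs i)) / ach ((⋃ i, graph (xs i)) ∪ graph (z n)))
      atTop (𝓝 0) := by
  set X := ⋃ i, graph (xs i)
  have hX : IsCompact X := isCompact_iUnion fun i => isCompact_graph (xs i)
  have hbound (n : ℕ) : (‖z n‖ - 3 * ‖xs ⟨0, hj⟩‖) / 4 ≤ ach (X ∪ graph (z n)) :=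
    norm_sub_three_mul_norm_div_four_le_ach (hX.union (isCompact_graph _)).isBounded
      ((Set.subset_iUnion (fun i => graph (xs i)) ⟨0, hj⟩).trans Set.subset_union_left)
      Set.subset_union_right
  have htop : Tendsto (fun n => ach (X ∪ graph (z n))) atTop atTop :=
    tendsto_atTop_mono hbound
      ((tendsto_atTop_add_const_right _ _ hz).atTop_div_const (by norm_num))
  exact ⟨htop, tendsto_const_nhds.div_atTop htop⟩

end
end

section
/- Let j ≥ 1 and x_1, …, x_j ∈ C([0,1]) be fixed. For all x, x₀ ∈ C([0,1]), d_H(Band(x_1, …, x_j, x), Band(x_1, …, x_j, x₀)) ≤ ‖x − x₀‖_∞, where d_H is the Hausdorff distance on nonempty compact subsets of ℝ² induced by the maximum metric d((s,u),(t,v)) = max(|s−t|, |u−v|). In particular, the map x ↦ Band(x_1, …, x_j, x) from (C([0,1]), ‖·‖_∞) to the space of nonempty compact subsets of ℝ² equipped with d_H is 1-Lipschitz, hence continuous. -/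
open MeasureTheory Filter Topology
open scoped ENNReal

noncomputable section

/-! Both bands have the same vertical sections `t`; replacing one curve by a curve at sup-distance
`ε` moves the endpoints `min_i x_i t` and `max_i x_i t` of each section by at most `ε`, so every
point of one section lies within `ε` of the corresponding section of the other band. -/

section FiniteFamily

variable {ι : Type*} [Finite ι] [Nonempty ι] {f g : ι → ℝ} {ε : ℝ}

theorem ciSup_le_ciSup_add_of_dist_le (h : ∀ i, dist (f i) (g i) ≤ ε) :
    ⨆ i, f i ≤ (⨆ i, g i) + ε :=
  ciSup_le fun i => by
    have hg : g i ≤ ⨆ i, g i := le_ciSup (Set.finite_range g).bddAbove i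
    linarith [(abs_le.mp (Real.dist_eq (f i) (g i) ▸ h i)).2]

theorem ciInf_sub_le_ciInf_of_dist_le (h : ∀ i, dist (f i) (g i) ≤ ε) :
    (⨅ i, g i) - ε ≤ ⨅ i, f i :=
  le_ciInf fun i => by
    have hg : ⨅ i, g i ≤ g i := ciInf_le (Set.finite_range g).bddBelow i
    linarith [(abs_le.mp (Real.dist_eq (f i) (g i) ▸ h i)).1]

end FiniteFamily

theorem exists_mem_Icc_dist_le {a b y ε : ℝ} (hab : a ≤ b) (hε : 0 ≤ ε)
    (hay : a - ε ≤ y) (hyb : y ≤ b + ε) : ∃ z ∈ Set.Icc a b, dist y z ≤ ε := by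
  refine ⟨max a (min b y), ⟨le_max_left _ _, max_le hab (min_le_left _ _)⟩, ?_⟩
  rw [Real.dist_eq, abs_le]
  constructor <;> cases max_cases a (min b y) <;> cases min_cases b y <;> linarith

section Band

variable {m : ℕ} [NeZero m] {xs ys : Fin m → CI} {ε : ℝ}

theorem exists_mem_band_dist_le (h : ∀ i, dist (xs i) (ys i) ≤ ε) :
    ∀ p ∈ band xs, ∃ q ∈ band ys, dist p q ≤ ε := by
  rintro ⟨s, y⟩ ⟨t, rfl, hinf, hsup⟩
  have hε : 0 ≤ ε := dist_nonneg.trans (h 0)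
  have ht : ∀ i, dist (xs i t) (ys i t) ≤ ε := fun i =>
    (ContinuousMap.dist_apply_le_dist t).trans (h i)
  have hys : ⨅ i, ys i t ≤ ⨆ i, ys i t :=
    ciInf_le_ciSup (Set.finite_range _).bddBelow (Set.finite_range _).bddAbove
  obtain ⟨z, hz, hyz⟩ := exists_mem_Icc_dist_le hys hε
    ((ciInf_sub_le_ciInf_of_dist_le ht).trans hinf) (hsup.trans (ciSup_le_ciSup_add_of_dist_le ht))
  refine ⟨((t : ℝ), z), ⟨t, rfl, hz.1, hz.2⟩, ?_⟩
  simpa [Prod.dist_eq, hε] using hyz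

theorem hausdorffDist_band_le (h : ∀ i, dist (xs i) (ys i) ≤ ε) :
    Metric.hausdorffDist (band xs) (band ys) ≤ ε :=
  Metric.hausdorffDist_le_of_mem_dist (dist_nonneg.trans (h 0)) (exists_mem_band_dist_le h)
    (exists_mem_band_dist_le fun i => dist_comm (xs i) (ys i) ▸ h i)

end Band

theorem band_hausdorffDist_le_general (j : ℕ) (xs : Fin j → CI) :
    ∀ x x₀ : CI,
      Metric.hausdorffDist (band (Fin.snoc xs x)) (band (Fin.snoc xs x₀)) ≤ ‖x - x₀‖ := by
  intro x x₀
  refine hausdorffDist_band_le fun i => ?_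
  induction i using Fin.lastCases with
  | last => simpa only [Fin.snoc_last] using (dist_eq_norm x x₀).le
  | cast k => simp only [Fin.snoc_castSucc, dist_self, norm_nonneg]

/-- the band map is `1`-Lipschitz for the Hausdorff distance (induced on subsets
of `ℝ²` by the maximum metric, the product metric on `ℝ × ℝ`):
`d_H(Band(x₁,…,x_j,x), Band(x₁,…,x_j,x₀)) ≤ ‖x − x₀‖_∞`. -/
theorem band_hausdorffDist_le (j : ℕ) (hj : 1 ≤ j) (xs : Fin j → CI) :
    ∀ x x₀ : CI,
      Metric.hausdorffDist (band (Fin.snoc xs x)) (band (Fin.snoc xs x₀)) ≤ ‖x - x₀‖ :=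
  band_hausdorffDist_le_general j xs

end
end

section
/- Define y_1 ∈ C([0,1]) by y_1(t) = −2t+1 for t ∈ [0,1/4], y_1(t) = 2t for t ∈ [1/4,1/2], y_1(t) = −2t+2 for t ∈ [1/2,3/4], and y_1(t) = 2t−1 for t ∈ [3/4,1]; let y_2 = −y_1, and let P = (1/2)δ_{y_1} + (1/2)δ_{y_2}. Then P is centrally symmetric about the constant function θ ≡ 0 (i.e., the pushforward of P under f ↦ −f equals P), D̄_2(θ, P) = 17/32, and D̄_2(θ, P) < D̄_2(y_1, P). In particular, the average ACH depth does not satisfy the 'maximality at the center' property. -/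
open MeasureTheory Filter Topology
open scoped ENNReal

noncomputable section

/-!
The hull of `graph y₁` is the trapezoid between `1` and the lower envelope
`max (1 - 2t) (2t - 1) (1/2)`, of area `3/8`; adding `graph θ` gives the unit square, adding
`graph (-y₁)` gives `[0,1] × [-1,1]` of area `2`, and adding `graph θ` to both changes nothing.
The reflection `(t, u) ↦ (t, -u)` preserves areas and swaps `y₁` and `-y₁`, so every ratio reduces
to these four areas: `D₁(θ) = 3/8`, `D₂(θ) = 11/16`, `D₁(y₁) = 19/32`, `D₂(y₁) = 51/64`, whence
`D̄₂(θ) = 17/32 < 89/128 = D̄₂(y₁)`.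
-/

open Set Convex

namespace MeasureTheory

variable {α : Type*} [MeasurableSpace α]

theorem integral_pi_fin_one (μ : Measure α) [SigmaFinite μ] (f : (Fin 1 → α) → ℝ) :
    ∫ x, f x ∂(Measure.pi fun _ => μ) = ∫ a, f (fun _ => a) ∂μ :=
  (((measurePreserving_funUnique μ (Fin 1)).symm _).integral_comp' f).symm

theorem integral_pi_fin_two (μ : Measure α) [SigmaFinite μ] (f : (Fin 2 → α) → ℝ) :
    ∫ x, f x ∂(Measure.pi fun _ => μ) = ∫ z, f ![z.1, z.2] ∂(μ.prod μ) :=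
  (((measurePreserving_finTwoArrow μ).symm _).integral_comp' f).symm

theorem integral_half_smul_add_half_smul {μ ν : Measure α} {f : α → ℝ}
    (hμ : Integrable f μ) (hν : Integrable f ν) :
    ∫ x, f x ∂((1/2 : ℝ≥0∞) • μ + (1/2 : ℝ≥0∞) • ν) = (∫ x, f x ∂μ + ∫ x, f x ∂ν) / 2 := by
  rw [integral_add_measure (hμ.smul_measure (by simp)) (hν.smul_measure (by simp)),
    integral_smul_measure, integral_smul_measure]
  simp only [one_div, ENNReal.toReal_inv, ENNReal.toReal_ofNat, smul_eq_mul]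
  ring

theorem isProbabilityMeasure_half_dirac_add_half_dirac (a b : α) :
    IsProbabilityMeasure ((1/2 : ℝ≥0∞) • Measure.dirac a + (1/2 : ℝ≥0∞) • Measure.dirac b) :=
  ⟨by simp [ENNReal.inv_two_add_inv_two]⟩

variable [MeasurableSingletonClass α]

theorem integrable_half_dirac_add_half_dirac (f : α → ℝ) (a b : α) :
    Integrable f ((1/2 : ℝ≥0∞) • Measure.dirac a + (1/2 : ℝ≥0∞) • Measure.dirac b) :=
  ((integrable_dirac enorm_lt_top).smul_measure (by simp)).add_measure
    ((integrable_dirac enorm_lt_top).smul_measure (by simp))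

theorem integral_half_dirac_add_half_dirac (f : α → ℝ) (a b : α) :
    ∫ x, f x ∂((1/2 : ℝ≥0∞) • Measure.dirac a + (1/2 : ℝ≥0∞) • Measure.dirac b)
      = (f a + f b) / 2 := by
  rw [integral_half_smul_add_half_smul (integrable_dirac enorm_lt_top)
    (integrable_dirac enorm_lt_top), integral_dirac, integral_dirac]

theorem integral_prod_half_dirac_add_half_dirac (f : α × α → ℝ) (a b : α) :
    ∫ z, f z ∂(((1/2 : ℝ≥0∞) • Measure.dirac a + (1/2 : ℝ≥0∞) • Measure.dirac b).prod
        ((1/2 : ℝ≥0∞) • Measure.dirac a + (1/2 : ℝ≥0∞) • Measure.dirac b))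
      = (f (a, a) + f (a, b) + f (b, a) + f (b, b)) / 4 := by
  have hprod : (((1/2 : ℝ≥0∞) • Measure.dirac a + (1/2 : ℝ≥0∞) • Measure.dirac b).prod
        ((1/2 : ℝ≥0∞) • Measure.dirac a + (1/2 : ℝ≥0∞) • Measure.dirac b)) =
      (1/2 : ℝ≥0∞) •
          ((1/2 : ℝ≥0∞) • Measure.dirac (a, a) + (1/2 : ℝ≥0∞) • Measure.dirac (a, b)) +
        (1/2 : ℝ≥0∞) •
          ((1/2 : ℝ≥0∞) • Measure.dirac (b, a) + (1/2 : ℝ≥0∞) • Measure.dirac (b, b)) := by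
    simp only [Measure.add_prod, Measure.prod_add, Measure.prod_smul_left,
      Measure.prod_smul_right, Measure.dirac_prod_dirac, smul_add, add_add_add_comm]
  rw [hprod, integral_half_smul_add_half_smul (integrable_half_dirac_add_half_dirac _ _ _)
    (integrable_half_dirac_add_half_dirac _ _ _), integral_half_dirac_add_half_dirac,
    integral_half_dirac_add_half_dirac]
  ring

theorem map_neg_half_dirac_add_half_dirac {G : Type*} [MeasurableSpace G] [InvolutiveNeg G]
    [MeasurableNeg G] (a : G) :
    ((1/2 : ℝ≥0∞) • Measure.dirac a + (1/2 : ℝ≥0∞) • Measure.dirac (-a)).map Neg.neg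
      = (1/2 : ℝ≥0∞) • Measure.dirac a + (1/2 : ℝ≥0∞) • Measure.dirac (-a) := by
  rw [Measure.map_add _ _ measurable_neg, Measure.map_smul, Measure.map_smul,
    Measure.map_dirac' measurable_neg, Measure.map_dirac' measurable_neg, neg_neg, add_comm]

end MeasureTheory

section Segment

variable {𝕜 E F : Type*} [Semiring 𝕜] [PartialOrder 𝕜] [AddCommMonoid E] [AddCommMonoid F]
  [Module 𝕜 E] [Module 𝕜 F]

theorem Convex.mk_mem_of_mem_segment_fst {C : Set (E × F)} (hC : Convex 𝕜 C) {x₁ x₂ x : E}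
    {y : F} (h₁ : (x₁, y) ∈ C) (h₂ : (x₂, y) ∈ C) (hx : x ∈ [x₁ -[𝕜] x₂]) : (x, y) ∈ C :=
  hC.segment_subset h₁ h₂ (Prod.image_mk_segment_left (𝕜 := 𝕜) x₁ x₂ y ▸ mem_image_of_mem _ hx)

theorem Convex.mk_mem_of_mem_segment_snd {C : Set (E × F)} (hC : Convex 𝕜 C) {x : E}
    {y₁ y₂ y : F} (h₁ : (x, y₁) ∈ C) (h₂ : (x, y₂) ∈ C) (hy : y ∈ [y₁ -[𝕜] y₂]) : (x, y) ∈ C :=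
  hC.segment_subset h₁ h₂ (Prod.image_mk_segment_right (𝕜 := 𝕜) x y₁ y₂ ▸ mem_image_of_mem _ hy)

end Segment

theorem convexHull_eq_region_between_cc {E : Type*} [AddCommGroup E] [Module ℝ E]
    {S : Set (E × ℝ)} {s : Set E} {f g : E → ℝ} (hf : ConvexOn ℝ s f) (hg : ConcaveOn ℝ s g)
    (hS : S ⊆ {p | p.1 ∈ s ∧ p.2 ∈ Icc (f p.1) (g p.1)})
    (hfS : ∀ x ∈ s, (x, f x) ∈ convexHull ℝ S) (hgS : ∀ x ∈ s, (x, g x) ∈ convexHull ℝ S) :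
    convexHull ℝ S = {p | p.1 ∈ s ∧ p.2 ∈ Icc (f p.1) (g p.1)} := by
  have hconv : Convex ℝ {p : E × ℝ | p.1 ∈ s ∧ p.2 ∈ Icc (f p.1) (g p.1)} := by
    convert hf.convex_epigraph.inter hg.convex_hypograph using 1
    ext p
    simp only [mem_ofPred_eq, Set.mem_Icc, mem_inter_iff]
    tauto
  refine (convexHull_min hS hconv).antisymm ?_
  rintro ⟨x, y⟩ ⟨hx, hy⟩
  exact (convex_convexHull ℝ S).mk_mem_of_mem_segment_snd (hfS x hx) (hgS x hx)
    ((segment_eq_Icc (hy.1.trans hy.2)).symm ▸ hy)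

theorem volume_region_between_cc_eq_integral {α : Type*} [MeasurableSpace α]
    {μ : Measure α} [SigmaFinite μ] {f g : α → ℝ} {s : Set α} (hf : Measurable f)
    (hg : Measurable g) (f_int : IntegrableOn f s μ) (g_int : IntegrableOn g s μ)
    (hs : MeasurableSet s) (hfg : ∀ x ∈ s, f x ≤ g x) :
    μ.prod volume {p | p.1 ∈ s ∧ p.2 ∈ Icc (f p.1) (g p.1)}
      = ENNReal.ofReal (∫ x in s, (g x - f x) ∂μ) := by
  have hslice : ∀ x, volume (Prod.mk x ⁻¹' {p : α × ℝ | p.1 ∈ s ∧ p.2 ∈ Icc (f p.1) (g p.1)})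
      = s.indicator (fun x => ENNReal.ofReal (g x - f x)) x := by
    intro x
    by_cases hx : x ∈ s
    · rw [indicator_of_mem hx, ← Real.volume_Icc]
      congr 1
      ext y
      simp [hx]
    · simp [hx]
  rw [Measure.prod_apply (measurableSet_region_between_cc hf hg hs)]
  simp_rw [hslice]
  rw [lintegral_indicator hs]
  exact (ofReal_integral_eq_lintegral_ofReal (g_int.sub f_int)
    ((ae_restrict_iff' hs).2 (Eventually.of_forall fun x hx => sub_nonneg.2 (hfg x hx)))).symm

theorem ach_eq_integral_of_convexOn_of_concaveOn {A : Set (ℝ × ℝ)} {a b : ℝ} {f g : ℝ → ℝ}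
    (hfc : Continuous f) (hgc : Continuous g)
    (hf : ConvexOn ℝ (Icc a b) f) (hg : ConcaveOn ℝ (Icc a b) g)
    (hA : A ⊆ {p | p.1 ∈ Icc a b ∧ p.2 ∈ Icc (f p.1) (g p.1)})
    (hfA : ∀ t ∈ Icc a b, (t, f t) ∈ convexHull ℝ A)
    (hgA : ∀ t ∈ Icc a b, (t, g t) ∈ convexHull ℝ A) :
    ach A = ∫ t in Icc a b, (g t - f t) := by
  have hhull := convexHull_eq_region_between_cc hf hg hA hfA hgA
  have hfg : ∀ t ∈ Icc a b, f t ≤ g t := fun t ht => (hhull ▸ hfA t ht).2.2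
  rw [ach, hhull, Measure.volume_eq_prod, volume_region_between_cc_eq_integral
    hfc.measurable hgc.measurable hfc.integrableOn_Icc hgc.integrableOn_Icc measurableSet_Icc hfg,
    ENNReal.toReal_ofReal
      (setIntegral_nonneg measurableSet_Icc fun t ht => sub_nonneg.2 (hfg t ht))]

theorem intervalIntegral.integral_mul_add_const (a b c d : ℝ) :
    ∫ t in a..b, (c * t + d) = c * (b ^ 2 - a ^ 2) / 2 + d * (b - a) := by
  rw [intervalIntegral.integral_add (intervalIntegrable_id.const_mul c) intervalIntegrable_const,
    intervalIntegral.integral_const_mul, integral_id, intervalIntegral.integral_const, smul_eq_mul]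
  ring

theorem convexOn_mul_add_const (c d : ℝ) : ConvexOn ℝ univ (fun t : ℝ => c * t + d) :=
  ⟨convex_univ, fun x _ y _ a b _ _ hab => le_of_eq (by
    simp only [smul_eq_mul]; linear_combination (-d) * hab)⟩

def zigzagFloor (t : ℝ) : ℝ := max (max (1 - 2 * t) (2 * t - 1)) (1 / 2)

theorem continuous_zigzagFloor : Continuous zigzagFloor := by
  unfold zigzagFloor; fun_prop

theorem convexOn_zigzagFloor : ConvexOn ℝ univ zigzagFloor := by
  have h : zigzagFloor =
      ((fun t => -2 * t + 1) ⊔ (fun t => 2 * t + -1)) ⊔ fun t => 0 * t + 1 / 2 := by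
    funext t
    simp only [zigzagFloor, Pi.sup_apply]
    ring_nf
  rw [h]
  exact ((convexOn_mul_add_const (-2) 1).sup (convexOn_mul_add_const 2 (-1))).sup
    (convexOn_mul_add_const 0 (1 / 2))

theorem half_le_zigzagFloor (t : ℝ) : 1 / 2 ≤ zigzagFloor t := le_max_right _ _

theorem zigzagFloor_of_le {t : ℝ} (ht : t ≤ 1/4) : zigzagFloor t = 1 - 2 * t := by
  rw [zigzagFloor, max_eq_left (show 2 * t - 1 ≤ 1 - 2 * t by linarith),
    max_eq_left (show (1 : ℝ) / 2 ≤ 1 - 2 * t by linarith)]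

theorem zigzagFloor_of_mem_Icc {t : ℝ} (ht : t ∈ Icc (1/4 : ℝ) (3/4)) : zigzagFloor t = 1 / 2 := by
  rw [zigzagFloor, max_eq_right (max_le (by linarith [ht.1]) (by linarith [ht.2]))]

theorem zigzagFloor_of_ge {t : ℝ} (ht : 3/4 ≤ t) : zigzagFloor t = 2 * t - 1 := by
  rw [zigzagFloor, max_eq_right (show 1 - 2 * t ≤ 2 * t - 1 by linarith),
    max_eq_left (show (1 : ℝ) / 2 ≤ 2 * t - 1 by linarith)]

theorem integral_one_sub_zigzagFloor : ∫ t in Icc (0 : ℝ) 1, (1 - zigzagFloor t) = 3 / 8 := by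
  have hint : ∀ a b : ℝ, IntervalIntegrable (fun t => 1 - zigzagFloor t) volume a b :=
    fun a b => (continuous_const.sub continuous_zigzagFloor).intervalIntegrable a b
  have h₁ : ∫ t in (0 : ℝ)..1/4, (1 - zigzagFloor t) = ∫ t in (0 : ℝ)..1/4, (2 * t + 0) :=
    intervalIntegral.integral_congr fun t ht => by
      rw [uIcc_of_le (by norm_num)] at ht
      simp only [zigzagFloor_of_le ht.2]
      ring
  have h₂ : ∫ t in (1/4 : ℝ)..3/4, (1 - zigzagFloor t) = ∫ t in (1/4 : ℝ)..3/4, (0 * t + 1 / 2) :=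
    intervalIntegral.integral_congr fun t ht => by
      rw [uIcc_of_le (by norm_num)] at ht
      simp only [zigzagFloor_of_mem_Icc ht]
      ring
  have h₃ : ∫ t in (3/4 : ℝ)..1, (1 - zigzagFloor t) = ∫ t in (3/4 : ℝ)..1, (-2 * t + 2) :=
    intervalIntegral.integral_congr fun t ht => by
      rw [uIcc_of_le (by norm_num)] at ht
      simp only [zigzagFloor_of_ge ht.1]
      ring
  rw [integral_Icc_eq_integral_Ioc, ← intervalIntegral.integral_of_le zero_le_one,
    ← intervalIntegral.integral_add_adjacent_intervals (hint 0 (1/4)) (hint (1/4) 1),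
    ← intervalIntegral.integral_add_adjacent_intervals (hint (1/4) (3/4)) (hint (3/4) 1),
    h₁, h₂, h₃, intervalIntegral.integral_mul_add_const, intervalIntegral.integral_mul_add_const,
    intervalIntegral.integral_mul_add_const]
  norm_num

theorem graph_neg (x : CI) : graph (-x) = Prod.map id Neg.neg '' graph x := by
  rw [graph, graph, ← range_comp]
  rfl

theorem ach_image_prodMap_neg (A : Set (ℝ × ℝ)) : ach (Prod.map id Neg.neg '' A) = ach A := by
  set σ : ℝ × ℝ → ℝ × ℝ := Prod.map id Neg.neg
  have hσ : Function.Involutive σ := fun p => Prod.ext rfl (neg_neg p.2)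
  have hlin : IsLinearMap ℝ σ :=
    ⟨fun p q => Prod.ext rfl (neg_add _ _), fun c p => Prod.ext rfl (smul_neg c p.2).symm⟩
  have hmp : MeasurePreserving σ := by
    rw [Measure.volume_eq_prod]
    exact (MeasurePreserving.id volume).prod (Measure.measurePreserving_neg volume)
  rw [ach, ach, ← hlin.image_convexHull, hσ.image_eq_preimage_symm,
    hmp.measure_preimage_emb (MeasurableEquiv.ofInvolutive σ hσ hmp.measurable).measurableEmbedding]

theorem iUnion_graph_pair (a b : CI) : ⋃ i, graph (![a, b] i) = graph a ∪ graph b := by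
  simp [Fin.exists_fin_two, Set.ext_iff]

theorem achRatio_const {m : ℕ} [NeZero m] (a x : CI) :
    achRatio (fun _ : Fin m => a) x = ach (graph a) / ach (graph a ∪ graph x) := by
  rw [achRatio, iUnion_const]

theorem achRatio_pair (a b x : CI) :
    achRatio ![a, b] x = ach (graph a ∪ graph b) / ach (graph a ∪ graph b ∪ graph x) := by
  rw [achRatio, iUnion_graph_pair]

theorem achRatio_pair_self (a x : CI) : achRatio ![a, a] x = achRatio (fun _ : Fin 1 => a) x := by
  rw [achRatio_pair, achRatio_const, union_self]

theorem achRatio_pair_comm (a b x : CI) : achRatio ![a, b] x = achRatio ![b, a] x := by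
  rw [achRatio_pair, achRatio_pair, union_comm (graph a)]

theorem achRatio_neg_left {m : ℕ} (xs : Fin m → CI) (x : CI) :
    achRatio (fun i => -xs i) x = achRatio xs (-x) := by
  have hxs : ⋃ i, graph (-xs i) = Prod.map id Neg.neg '' ⋃ i, graph (xs i) := by
    simp only [graph_neg, image_iUnion]
  have hx : graph x = Prod.map id Neg.neg '' graph (-x) := by
    rw [graph_neg, image_image]
    simp [Prod.map_map]
  rw [achRatio, achRatio, hxs, hx, ← image_union, ach_image_prodMap_neg, ach_image_prodMap_neg]

theorem achRatio_of_mem_range {m : ℕ} {xs : Fin m → CI} {x : CI} (hx : x ∈ range xs)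
    (hpos : ach (⋃ i, graph (xs i)) ≠ 0) : achRatio xs x = 1 := by
  obtain ⟨i, rfl⟩ := hx
  rw [achRatio, union_eq_left.2 (subset_iUnion (fun j => graph (xs j)) i), div_self hpos]

theorem ACHDepth_one_of_eq {P : Measure CI} {a b : CI}
    (hP : P = (1/2 : ℝ≥0∞) • Measure.dirac a + (1/2 : ℝ≥0∞) • Measure.dirac b) (x : CI) :
    ACHDepth 1 P x = (achRatio (fun _ : Fin 1 => a) x + achRatio (fun _ : Fin 1 => b) x) / 2 := by
  subst hP
  have := isProbabilityMeasure_half_dirac_add_half_dirac a b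
  rw [ACHDepth, integral_pi_fin_one, integral_half_dirac_add_half_dirac]

theorem ACHDepth_two_of_eq {P : Measure CI} {a b : CI}
    (hP : P = (1/2 : ℝ≥0∞) • Measure.dirac a + (1/2 : ℝ≥0∞) • Measure.dirac b) (x : CI) :
    ACHDepth 2 P x = (achRatio ![a, a] x + achRatio ![a, b] x
      + achRatio ![b, a] x + achRatio ![b, b] x) / 4 := by
  subst hP
  have := isProbabilityMeasure_half_dirac_add_half_dirac a b
  rw [ACHDepth, integral_pi_fin_two, integral_prod_half_dirac_add_half_dirac]

theorem avgACHDepth_two (P : Measure CI) (x : CI) :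
    avgACHDepth 2 P x = (ACHDepth 1 P x + ACHDepth 2 P x) / 2 := by
  rw [avgACHDepth, show Finset.Icc 1 2 = {1, 2} by rfl,
    Finset.sum_pair (by norm_num : (1 : ℕ) ≠ 2)]
  push_cast
  ring

theorem mk_mem_convexHull_graph {x : CI} {a b : I01} {c t : ℝ} (ha : x a = c) (hb : x b = c)
    (ht : t ∈ [(a : ℝ) -[ℝ] b]) : (t, c) ∈ convexHull ℝ (graph x) :=
  (convex_convexHull ℝ _).mk_mem_of_mem_segment_fst
    (subset_convexHull ℝ _ ⟨a, Prod.ext rfl ha⟩) (subset_convexHull ℝ _ ⟨b, Prod.ext rfl hb⟩) ht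

def IsZigzag (y : CI) : Prop :=
  (∀ s : I01, (s : ℝ) ≤ 1/4 → y s = -2 * (s : ℝ) + 1) ∧
  (∀ s : I01, 1/4 ≤ (s : ℝ) → (s : ℝ) ≤ 1/2 → y s = 2 * (s : ℝ)) ∧
  (∀ s : I01, 1/2 ≤ (s : ℝ) → (s : ℝ) ≤ 3/4 → y s = -2 * (s : ℝ) + 2) ∧
  (∀ s : I01, 3/4 ≤ (s : ℝ) → y s = 2 * (s : ℝ) - 1)

namespace IsZigzag

variable {y : CI}

theorem apply_mem_Icc (hy : IsZigzag y) (s : I01) : y s ∈ Icc (zigzagFloor s) 1 := by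
  obtain ⟨h₁, h₂, h₃, h₄⟩ := hy
  obtain ⟨hs₀, hs₁⟩ := s.2
  rcases le_total (s : ℝ) (1/4) with hs | hs
  · rw [h₁ s hs, zigzagFloor_of_le hs]; constructor <;> linarith
  rcases le_total (s : ℝ) (1/2) with hs' | hs'
  · rw [h₂ s hs hs', zigzagFloor_of_mem_Icc ⟨hs, by linarith⟩]; constructor <;> linarith
  rcases le_total (s : ℝ) (3/4) with hs'' | hs''
  · rw [h₃ s hs' hs'', zigzagFloor_of_mem_Icc ⟨by linarith, hs''⟩]; constructor <;> linarith
  · rw [h₄ s hs'', zigzagFloor_of_ge hs'']; constructor <;> linarith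

theorem half_le_apply (hy : IsZigzag y) (s : I01) : 1 / 2 ≤ y s :=
  (half_le_zigzagFloor s).trans (hy.apply_mem_Icc s).1

theorem apply_zero (hy : IsZigzag y) : y 0 = 1 := by
  rw [hy.1 0 (by simp)]; simp

theorem apply_one (hy : IsZigzag y) : y 1 = 1 := by
  rw [hy.2.2.2 1 (by norm_num)]; norm_num

theorem mk_one_mem_convexHull_graph (hy : IsZigzag y) {t : ℝ} (ht : t ∈ Icc (0 : ℝ) 1) :
    (t, 1) ∈ convexHull ℝ (graph y) :=
  mk_mem_convexHull_graph hy.apply_zero hy.apply_one (by simpa [segment_eq_Icc] using ht)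

theorem mk_neg_one_mem_convexHull_graph_neg (hy : IsZigzag y) {t : ℝ} (ht : t ∈ Icc (0 : ℝ) 1) :
    (t, -1) ∈ convexHull ℝ (graph (-y)) :=
  mk_mem_convexHull_graph (a := 0) (b := 1) (by simp [hy.apply_zero]) (by simp [hy.apply_one])
    (by simpa [segment_eq_Icc] using ht)

theorem mk_zigzagFloor_mem_convexHull_graph (hy : IsZigzag y) {t : ℝ} (ht : t ∈ Icc (0 : ℝ) 1) :
    (t, zigzagFloor t) ∈ convexHull ℝ (graph y) := by
  obtain ⟨h₁, -, -, h₄⟩ := hy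
  rcases le_total t (1/4) with h | h
  · refine subset_convexHull ℝ _ ⟨⟨t, ht⟩, Prod.ext rfl ?_⟩
    simp only [h₁ ⟨t, ht⟩ h, zigzagFloor_of_le h]
    ring
  rcases le_total t (3/4) with h' | h'
  · rw [zigzagFloor_of_mem_Icc ⟨h, h'⟩]
    refine mk_mem_convexHull_graph (a := ⟨1/4, by norm_num⟩) (b := ⟨3/4, by norm_num⟩) ?_ ?_ ?_
    · rw [h₁ _ le_rfl]; norm_num
    · rw [h₄ _ le_rfl]; norm_num
    · rw [segment_eq_Icc (by norm_num)]; exact ⟨h, h'⟩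
  · refine subset_convexHull ℝ _ ⟨⟨t, ht⟩, Prod.ext rfl ?_⟩
    simp only [h₄ ⟨t, ht⟩ h', zigzagFloor_of_ge h']

theorem ach_graph (hy : IsZigzag y) : ach (graph y) = 3 / 8 := by
  rw [ach_eq_integral_of_convexOn_of_concaveOn continuous_zigzagFloor continuous_const
    (convexOn_zigzagFloor.subset (subset_univ _) (convex_Icc 0 1))
    (concaveOn_const 1 (convex_Icc 0 1)) ?_
    (fun t ht => hy.mk_zigzagFloor_mem_convexHull_graph ht)
    (fun t ht => hy.mk_one_mem_convexHull_graph ht)]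
  · exact integral_one_sub_zigzagFloor
  · rintro _ ⟨s, rfl⟩
    exact ⟨s.2, hy.apply_mem_Icc s⟩

theorem ach_graph_union_graph_zero (hy : IsZigzag y) : ach (graph y ∪ graph 0) = 1 := by
  rw [ach_eq_integral_of_convexOn_of_concaveOn (f := fun _ => 0) (g := fun _ => 1)
    continuous_const continuous_const (convexOn_const 0 (convex_Icc 0 1))
    (concaveOn_const 1 (convex_Icc 0 1)) ?_ ?_ ?_]
  · simp
  · rintro _ (⟨s, rfl⟩ | ⟨s, rfl⟩)
    · exact ⟨s.2, by linarith [hy.half_le_apply s], (hy.apply_mem_Icc s).2⟩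
    · exact ⟨s.2, by simp⟩
  · exact fun t ht => subset_convexHull ℝ _ (Or.inr ⟨⟨t, ht⟩, rfl⟩)
  · exact fun t ht => convexHull_mono subset_union_left (hy.mk_one_mem_convexHull_graph ht)

theorem ach_eq_two_of_subset (hy : IsZigzag y) {S : Set (ℝ × ℝ)}
    (h₁ : graph y ∪ graph (-y) ⊆ S) (h₂ : S ⊆ graph y ∪ graph (-y) ∪ graph 0) : ach S = 2 := by
  rw [ach_eq_integral_of_convexOn_of_concaveOn (f := fun _ => -1) (g := fun _ => 1)
    continuous_const continuous_const (convexOn_const (-1) (convex_Icc 0 1))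
    (concaveOn_const 1 (convex_Icc 0 1)) (h₂.trans ?_) ?_ ?_]
  · norm_num
  · rintro _ ((⟨s, rfl⟩ | ⟨s, rfl⟩) | ⟨s, rfl⟩)
    · exact ⟨s.2, by linarith [hy.half_le_apply s], (hy.apply_mem_Icc s).2⟩
    · exact ⟨s.2, by simp [(hy.apply_mem_Icc s).2], by simp; linarith [hy.half_le_apply s]⟩
    · exact ⟨s.2, by simp⟩
  · exact fun t ht => convexHull_mono (subset_union_right.trans h₁)
      (hy.mk_neg_one_mem_convexHull_graph_neg ht)
  · exact fun t ht => convexHull_mono (subset_union_left.trans h₁)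
      (hy.mk_one_mem_convexHull_graph ht)

end IsZigzag

/-- counterexample to 'maximality at the center'. With `y₁` the piecewise
linear zigzag described below, `y₂ = −y₁` and `P = (1/2)δ_{y₁} + (1/2)δ_{y₂}`, the measure `P`
is centrally symmetric about `θ ≡ 0`, yet `D̄₂(θ,P) = 17/32 < D̄₂(y₁,P)`. -/
theorem ach_depth_not_maximal_at_center (y₁ : CI)
    (h1 : ∀ s : I01, (s : ℝ) ≤ 1/4 → y₁ s = -2 * (s : ℝ) + 1)
    (h2 : ∀ s : I01, 1/4 ≤ (s : ℝ) → (s : ℝ) ≤ 1/2 → y₁ s = 2 * (s : ℝ))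
    (h3 : ∀ s : I01, 1/2 ≤ (s : ℝ) → (s : ℝ) ≤ 3/4 → y₁ s = -2 * (s : ℝ) + 2)
    (h4 : ∀ s : I01, 3/4 ≤ (s : ℝ) → y₁ s = 2 * (s : ℝ) - 1)
    (P : Measure CI)
    (hPdef : P = (1/2 : ℝ≥0∞) • Measure.dirac y₁ + (1/2 : ℝ≥0∞) • Measure.dirac (-y₁)) :
    Measure.map (fun f : CI => -f) P = P ∧
    avgACHDepth 2 P 0 = 17/32 ∧
    avgACHDepth 2 P 0 < avgACHDepth 2 P y₁ := by
  have hy : IsZigzag y₁ := ⟨h1, h2, h3, h4⟩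
  have hA := hy.ach_graph
  have hB := hy.ach_graph_union_graph_zero
  have hC := hy.ach_eq_two_of_subset subset_rfl subset_union_left
  have hD := hy.ach_eq_two_of_subset subset_union_left subset_rfl
  have hθ : avgACHDepth 2 P 0 = 17 / 32 := by
    rw [avgACHDepth_two, ACHDepth_one_of_eq hPdef, ACHDepth_two_of_eq hPdef, achRatio_pair_self,
      achRatio_pair_self, achRatio_pair_comm (-y₁), achRatio_neg_left, neg_zero, achRatio_const,
      achRatio_pair, hA, hB, hC, hD]
    norm_num
  have hy₁ : avgACHDepth 2 P y₁ = 89 / 128 := by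
    rw [avgACHDepth_two, ACHDepth_one_of_eq hPdef, ACHDepth_two_of_eq hPdef, achRatio_pair_self,
      achRatio_pair_self, achRatio_pair_comm (-y₁), achRatio_neg_left,
      achRatio_of_mem_range (x := y₁) (xs := ![y₁, -y₁]) ⟨0, rfl⟩
        (by rw [iUnion_graph_pair, hC]; norm_num),
      achRatio_const, achRatio_const, union_self, hA, hC]
    norm_num
  refine ⟨?_, hθ, by rw [hθ, hy₁]; norm_num⟩
  · rw [hPdef]
    exact map_neg_half_dirac_add_half_dirac y₁
end
end
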